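/- arXiv:2108.00132 — 5 statements merged into one kernel-verified Lean document; each statement's English description precedes it below -/
import Mathlib

section
/- Let f be convex, differentiable with L-Lipschitz gradient. Then for any three points x_k, y, x_{k+1}: f(x_{k+1}) - f(x_k) ≤ ⟨∇f(y), x_{k+1} - x_k⟩ + (L/2)‖x_{k+1} - y‖² - (1/(2L))‖∇f(y) - ∇f(x_k)‖². -/
open RealInnerProductSpace

section Aux

variable {E : Type*} [NormedAddCommGroup E] [InnerProductSpace ℝ E] [CompleteSpace E]

/-- Derivative of `f` along a line. -/
lemma aux_hasDerivAt_line (f : E → ℝ) (f' : E → E) (hgrad : ∀ x, HasGradientAt f (f' x) x)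
    (a b : E) (t : ℝ) :
    HasDerivAt (fun s : ℝ => f (a + s • (b - a))) ⟪f' (a + t • (b - a)), b - a⟫ t := by
  have h1 : HasDerivAt (fun s : ℝ => a + s • (b - a)) (b - a) t := by
    simpa using ((hasDerivAt_id t).smul_const (b - a)).const_add a
  have h2 : HasFDerivAt f (InnerProductSpace.toDual ℝ E (f' (a + t • (b - a))))
      (a + t • (b - a)) := hgrad _
  have h3 := h2.comp_hasDerivAt t h1; simp at h3; exact h3

/-- First-order condition: convex differentiable `f` lies above its tangents. -/
lemma aux_grad_lower (f : E → ℝ) (f' : E → E) (hgrad : ∀ x, HasGradientAt f (f' x) x)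
    (hconv : ConvexOn ℝ Set.univ f) (x z : E) :
    f x + ⟪f' x, z - x⟫ ≤ f z := by
  have hg : ConvexOn ℝ Set.univ (fun s : ℝ => f (x + s • (z - x))) := by
    have := hconv.comp_affineMap (AffineMap.lineMap x z : ℝ →ᵃ[ℝ] E)
    simp only [Set.preimage_univ] at this
    have heq : (fun s : ℝ => f (x + s • (z - x))) = f ∘ AffineMap.lineMap x z := by
      funext s; simp [AffineMap.lineMap_apply, add_comm]
    rw [heq]; exact this
  have hd := aux_hasDerivAt_line f f' hgrad x z 0
  simp only [zero_smul, add_zero] at hd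
  have hslope := hg.le_slope_of_hasDerivAt (Set.mem_univ 0) (Set.mem_univ 1) one_pos hd
  have : slope (fun s : ℝ => f (x + s • (z - x))) 0 1 = f z - f x := by
    simp [slope_def_field]
  rw [this] at hslope
  linarith

/-- Descent lemma: `f z ≤ f x + ⟪∇f x, z - x⟫ + L/2 ‖z - x‖²`. -/
lemma aux_descent (L : ℝ) (hL : 0 < L) (f : E → ℝ) (f' : E → E)
    (hgrad : ∀ x, HasGradientAt f (f' x) x)
    (hlip : ∀ x y, ‖f' x - f' y‖ ≤ L * ‖x - y‖) (x z : E) :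
    f z ≤ f x + ⟪f' x, z - x⟫ + L / 2 * ‖z - x‖ ^ 2 := by
  set h : ℝ → ℝ := fun t => f (x + t • (z - x)) - t * ⟪f' x, z - x⟫
    - L / 2 * t ^ 2 * ‖z - x‖ ^ 2 with hh
  have hd : ∀ t : ℝ, HasDerivAt h
      (⟪f' (x + t • (z - x)), z - x⟫ - ⟪f' x, z - x⟫ - L * t * ‖z - x‖ ^ 2) t := by
    intro t
    have h1 := aux_hasDerivAt_line f f' hgrad x z t
    have h2 : HasDerivAt (fun s : ℝ => s * ⟪f' x, z - x⟫) ⟪f' x, z - x⟫ t := by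
      simpa using (hasDerivAt_id t).mul_const ⟪f' x, z - x⟫
    have h3 : HasDerivAt (fun s : ℝ => L / 2 * s ^ 2 * ‖z - x‖ ^ 2)
        (L * t * ‖z - x‖ ^ 2) t := by
      have : HasDerivAt (fun s : ℝ => s ^ 2) (2 * t) t := by
        simpa using hasDerivAt_pow 2 t
      exact ((this.const_mul (L / 2)).mul_const (‖z - x‖ ^ 2)).congr_deriv (by ring)
    exact (h1.sub h2).sub h3
  have hmono : AntitoneOn h (Set.Icc 0 1) := by
    apply antitoneOn_of_deriv_nonpos (convex_Icc 0 1)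
    · exact fun t _ => ((hd t).differentiableAt).continuousAt.continuousWithinAt
    · exact fun t _ => ((hd t).differentiableAt).differentiableWithinAt
    · intro t ht
      rw [interior_Icc] at ht
      rw [(hd t).deriv]
      have key : ⟪f' (x + t • (z - x)) - f' x, z - x⟫ ≤ L * t * ‖z - x‖ ^ 2 := by
        calc ⟪f' (x + t • (z - x)) - f' x, z - x⟫
            ≤ ‖f' (x + t • (z - x)) - f' x‖ * ‖z - x‖ := real_inner_le_norm _ _
          _ ≤ (L * ‖(x + t • (z - x)) - x‖) * ‖z - x‖ := by
              have := hlip (x + t • (z - x)) x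
              nlinarith [norm_nonneg (z - x)]
          _ = L * t * ‖z - x‖ ^ 2 := by
              rw [show (x + t • (z - x)) - x = t • (z - x) by abel, norm_smul]
              rw [Real.norm_eq_abs, abs_of_pos ht.1]
              ring
      rw [inner_sub_left] at key
      linarith
  have h01 := hmono (Set.left_mem_Icc.mpr zero_le_one) (Set.right_mem_Icc.mpr zero_le_one)
    zero_le_one
  simp only [hh, zero_smul, add_zero, zero_mul, one_smul, one_mul, one_pow,
    add_sub_cancel] at h01
  nlinarith [h01]

/-- Lower bound with gradient difference: cocoercivity-style inequality. -/
lemma aux_lower (L : ℝ) (hL : 0 < L) (f : E → ℝ) (f' : E → E)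
    (hgrad : ∀ x, HasGradientAt f (f' x) x)
    (hconv : ConvexOn ℝ Set.univ f)
    (hlip : ∀ x y, ‖f' x - f' y‖ ≤ L * ‖x - y‖) (x z : E) :
    f x + ⟪f' x, z - x⟫ + 1 / (2 * L) * ‖f' z - f' x‖ ^ 2 ≤ f z := by
  set φ : E → ℝ := fun w => f w - ⟪f' x, w⟫ with hφ
  set φ' : E → E := fun w => f' w - f' x with hφ'
  have hφgrad : ∀ w, HasGradientAt φ (φ' w) w := by
    intro w
    have h1 : HasFDerivAt f (InnerProductSpace.toDual ℝ E (f' w)) w := hgrad w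
    have h2 : HasFDerivAt (fun v : E => ⟪f' x, v⟫)
        (InnerProductSpace.toDual ℝ E (f' x)) w :=
      (InnerProductSpace.toDual ℝ E (f' x)).hasFDerivAt
    have := h1.sub h2
    rw [← map_sub] at this
    exact this
  have hlin : ConcaveOn ℝ (Set.univ : Set E) (fun w : E => ⟪f' x, w⟫) := by
    constructor
    · exact convex_univ
    · intro a _ b _ p q hp hq hpq
      simp [inner_add_right, real_inner_smul_right]
  have hφconv : ConvexOn ℝ Set.univ φ := hconv.sub hlin
  have hφlip : ∀ a b, ‖φ' a - φ' b‖ ≤ L * ‖a - b‖ := by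
    intro a b
    have : φ' a - φ' b = f' a - f' b := by simp only [hφ']; abel
    rw [this]; exact hlip a b
  set w : E := z - (1 / L) • (φ' z) with hw
  have hA : φ x ≤ φ w := by
    have := aux_grad_lower φ φ' hφgrad hφconv x w
    have hz0 : φ' x = 0 := by simp [hφ']
    rw [hz0] at this
    simpa using this
  have hB : φ w ≤ φ z + ⟪φ' z, w - z⟫ + L / 2 * ‖w - z‖ ^ 2 :=
    aux_descent L hL φ φ' hφgrad hφlip z w
  have hwz : w - z = -((1 / L) • (φ' z)) := by rw [hw]; abel
  have hinner : ⟪φ' z, w - z⟫ = -(1 / L) * ‖φ' z‖ ^ 2 := by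
    rw [hwz, inner_neg_right, real_inner_smul_right, real_inner_self_eq_norm_sq]
    ring
  have hnorm : ‖w - z‖ ^ 2 = (1 / L) ^ 2 * ‖φ' z‖ ^ 2 := by
    rw [hwz, norm_neg, norm_smul, Real.norm_eq_abs, abs_of_pos (by positivity : (0:ℝ) < 1 / L)]
    ring
  have hL' : L ≠ 0 := ne_of_gt hL
  have hkey : φ x ≤ φ z - 1 / (2 * L) * ‖φ' z‖ ^ 2 := by
    calc φ x ≤ φ w := hA
      _ ≤ φ z + ⟪φ' z, w - z⟫ + L / 2 * ‖w - z‖ ^ 2 := hB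
      _ = φ z - 1 / (2 * L) * ‖φ' z‖ ^ 2 := by
          rw [hinner, hnorm]; field_simp; ring
  have hφx : φ x = f x - ⟪f' x, x⟫ := rfl
  have hφz : φ z = f z - ⟪f' x, z⟫ := rfl
  have hφ'z : φ' z = f' z - f' x := rfl
  rw [hφx, hφz, hφ'z] at hkey
  rw [inner_sub_right]
  linarith

end Aux

theorem stmt_7 (n : ℕ) (L : ℝ) (hL : 0 < L)
    (f : EuclideanSpace ℝ (Fin n) → ℝ) (f' : EuclideanSpace ℝ (Fin n) → EuclideanSpace ℝ (Fin n))
    (hgrad : ∀ x, HasGradientAt f (f' x) x)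
    (hconv : ConvexOn ℝ Set.univ f)
    (hlip : ∀ x y, ‖f' x - f' y‖ ≤ L * ‖x - y‖)
    (xk y xk1 : EuclideanSpace ℝ (Fin n)) :
    f xk1 - f xk ≤ ⟪f' y, xk1 - xk⟫ + L / 2 * ‖xk1 - y‖ ^ 2
      - 1 / (2 * L) * ‖f' y - f' xk‖ ^ 2 := by
  have hB := aux_descent L hL f f' hgrad hlip y xk1
  have hC := aux_lower L hL f f' hgrad hconv hlip y xk
  have h1 : ⟪f' y, xk1 - y⟫ - ⟪f' y, xk - y⟫ = ⟪f' y, xk1 - xk⟫ := by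
    rw [← inner_sub_right]
    congr 1
    abel
  have h2 : ‖f' xk - f' y‖ = ‖f' y - f' xk‖ := norm_sub_rev _ _
  rw [h2] at hC
  linarith
end

section
/- Let f be μ-strongly convex and differentiable with μ > 0. The proximal point iteration x_{k+1} = x_k - α_k ∇f(x_{k+1}) with α_k > 0 satisfies L_{k+1} ≤ L_k/(1 + μ α_k), where L_k = f(x_k) - f(x*) + (μ/2)‖x_k - x*‖². -/
open RealInnerProductSpace

theorem stmt_16 (n : ℕ) (μ αk : ℝ) (hμ : 0 < μ) (hαk : 0 < αk)
    (f : EuclideanSpace ℝ (Fin n) → ℝ) (f' : EuclideanSpace ℝ (Fin n) → EuclideanSpace ℝ (Fin n))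
    (hgrad : ∀ x, HasGradientAt f (f' x) x)
    (hsc : ∀ x y, f y ≥ f x + ⟪f' x, y - x⟫ + μ / 2 * ‖y - x‖ ^ 2)
    (xstar : EuclideanSpace ℝ (Fin n)) (hmin : ∀ x, f xstar ≤ f x) (hcrit : f' xstar = 0)
    (xk xk1 : EuclideanSpace ℝ (Fin n))
    (hstep : xk1 = xk - αk • f' xk1) :
    f xk1 - f xstar + μ / 2 * ‖xk1 - xstar‖ ^ 2 ≤
      (f xk - f xstar + μ / 2 * ‖xk - xstar‖ ^ 2) / (1 + μ * αk) := by
  set g := f' xk1 with hg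
  have hxk : xk - xk1 = αk • g := by rw [hstep]; abel
  have hA := hsc xk1 xk
  have hB := hsc xk1 xstar
  have h1 : ⟪g, xk - xk1⟫ = αk * ‖g‖ ^ 2 := by
    rw [hxk, real_inner_smul_right, real_inner_self_eq_norm_sq]
  have h2 : ‖xk - xk1‖ ^ 2 = αk ^ 2 * ‖g‖ ^ 2 := by
    rw [hxk, norm_smul, mul_pow, Real.norm_eq_abs, sq_abs]
  have h3 : ⟪g, xstar - xk1⟫ = -⟪g, xk1 - xstar⟫ := by
    rw [← inner_neg_right, neg_sub]
  have h4 : ‖xstar - xk1‖ = ‖xk1 - xstar‖ := norm_sub_rev _ _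
  have hdecomp : xk - xstar = (xk1 - xstar) + αk • g := by
    rw [hstep]; abel
  have h5 : ‖xk - xstar‖ ^ 2 = ‖xk1 - xstar‖ ^ 2 + 2 * (αk * ⟪g, xk1 - xstar⟫)
      + αk ^ 2 * ‖g‖ ^ 2 := by
    rw [hdecomp, norm_add_sq_real, real_inner_smul_right, real_inner_comm, norm_smul,
      mul_pow, Real.norm_eq_abs, sq_abs]
  have hpos : 0 < 1 + μ * αk := by nlinarith
  rw [le_div_iff₀ hpos]
  rw [h1, h2] at hA
  rw [h3, h4] at hB
  nlinarith [mul_pos hμ hαk, sq_nonneg ‖g‖, sq_nonneg ‖xk1 - xstar‖,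
    mul_nonneg (mul_nonneg hμ.le hαk.le) (sq_nonneg ‖g‖),
    mul_nonneg (mul_nonneg (mul_pos hμ hαk).le hαk.le) (sq_nonneg ‖g‖)]
end

section
/- Let f be μ-strongly convex and differentiable with ∇f L-Lipschitz, 0 < μ ≤ L. The gradient descent iteration x_{k+1} = x_k - α ∇f(x_k) with 0 < α ≤ 2/(L+μ) satisfies L_{k+1} ≤ (1 - μα) L_k, where L_k = f(x_k) - f(x*) + (μ/2)‖x_k - x*‖². -/
open RealInnerProductSpace

lemma descent_lemma {n : ℕ} (L : ℝ) (hL : 0 ≤ L)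
    (f : EuclideanSpace ℝ (Fin n) → ℝ) (f' : EuclideanSpace ℝ (Fin n) → EuclideanSpace ℝ (Fin n))
    (hgrad : ∀ x, HasGradientAt f (f' x) x)
    (hlip : ∀ x y, ‖f' x - f' y‖ ≤ L * ‖x - y‖)
    (x v : EuclideanSpace ℝ (Fin n)) :
    f (x + v) ≤ f x + ⟪f' x, v⟫ + L / 2 * ‖v‖ ^ 2 := by
  set h : ℝ → ℝ := fun t => f (x + t • v) - t * ⟪f' x, v⟫ - L / 2 * t ^ 2 * ‖v‖ ^ 2 with hh
  have hderiv : ∀ t : ℝ, HasDerivAt h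
      (⟪f' (x + t • v), v⟫ - ⟪f' x, v⟫ - L * t * ‖v‖ ^ 2) t := by
    intro t
    have hc : HasDerivAt (fun t : ℝ => x + t • v) v t :=
      by simpa using ((hasDerivAt_id t).smul_const v).const_add x
    have h1 : HasDerivAt (fun t : ℝ => f (x + t • v)) ⟪f' (x + t • v), v⟫ t := by
      have := ((hgrad (x + t • v)).hasFDerivAt.comp_hasDerivAt t hc)
      simp at this
      exact this
    have h2 : HasDerivAt (fun t : ℝ => t * ⟪f' x, v⟫) ⟪f' x, v⟫ t := by
      simpa using (hasDerivAt_id t).mul_const ⟪f' x, v⟫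
    have h3 : HasDerivAt (fun t : ℝ => L / 2 * t ^ 2 * ‖v‖ ^ 2) (L * t * ‖v‖ ^ 2) t := by
      have := (((hasDerivAt_id t).pow 2).const_mul (L / 2)).mul_const (‖v‖ ^ 2)
      refine this.congr_deriv ?_
      simp only [id]
      ring
    exact (h1.sub h2).sub h3
  have hanti : AntitoneOn h (Set.Icc (0:ℝ) 1) := by
    apply antitoneOn_of_deriv_nonpos (convex_Icc 0 1)
    · exact (continuous_iff_continuousAt.2 fun t => (hderiv t).continuousAt).continuousOn
    · intro t ht; exact (hderiv t).differentiableAt.differentiableWithinAt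
    · intro t ht
      rw [(hderiv t).deriv]
      rw [interior_Icc] at ht
      have hb : ⟪f' (x + t • v) - f' x, v⟫ ≤ L * t * ‖v‖ ^ 2 := by
        calc ⟪f' (x + t • v) - f' x, v⟫ ≤ ‖f' (x + t • v) - f' x‖ * ‖v‖ :=
              real_inner_le_norm _ _
          _ ≤ (L * ‖(x + t • v) - x‖) * ‖v‖ := by
              apply mul_le_mul_of_nonneg_right (hlip _ _) (norm_nonneg _)
          _ = L * t * ‖v‖ ^ 2 := by
              rw [add_sub_cancel_left, norm_smul]
              simp [abs_of_pos ht.1]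
              ring
      have := inner_sub_left (𝕜 := ℝ) (f' (x + t • v)) (f' x) v
      linarith [hb, this.symm.le, this.le]
  have := hanti (Set.left_mem_Icc.2 zero_le_one) (Set.right_mem_Icc.2 zero_le_one) zero_le_one
  simp only [hh, one_smul, zero_smul, add_zero, one_pow, zero_pow, one_mul, zero_mul,
    mul_zero, sub_zero] at this
  linarith

theorem stmt_17 (n : ℕ) (μ L α : ℝ) (hμ : 0 < μ) (hμL : μ ≤ L)
    (hα : 0 < α) (hα' : α ≤ 2 / (L + μ))
    (f : EuclideanSpace ℝ (Fin n) → ℝ) (f' : EuclideanSpace ℝ (Fin n) → EuclideanSpace ℝ (Fin n))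
    (hgrad : ∀ x, HasGradientAt f (f' x) x)
    (hsc : ∀ x y, f y ≥ f x + ⟪f' x, y - x⟫ + μ / 2 * ‖y - x‖ ^ 2)
    (hlip : ∀ x y, ‖f' x - f' y‖ ≤ L * ‖x - y‖)
    (xstar : EuclideanSpace ℝ (Fin n)) (hmin : ∀ x, f xstar ≤ f x) (hcrit : f' xstar = 0)
    (xk xk1 : EuclideanSpace ℝ (Fin n))
    (hstep : xk1 = xk - α • f' xk) :
    f xk1 - f xstar + μ / 2 * ‖xk1 - xstar‖ ^ 2 ≤
      (1 - μ * α) * (f xk - f xstar + μ / 2 * ‖xk - xstar‖ ^ 2) := by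
  have hL : (0:ℝ) ≤ L := le_trans hμ.le hμL
  set g := f' xk with hg
  set e := xk - xstar with he
  have hG : ‖(-(α • g))‖ ^ 2 = α ^ 2 * ‖g‖ ^ 2 := by
    rw [norm_neg, norm_smul, mul_pow]
    simp [abs_of_pos hα]
  have hA : f xk1 ≤ f xk - α * ‖g‖ ^ 2 + L / 2 * (α ^ 2 * ‖g‖ ^ 2) := by
    have := descent_lemma L hL f f' hgrad hlip xk (-(α • g))
    rw [hG] at this
    have hx : xk + -(α • g) = xk1 := by rw [hstep, sub_eq_add_neg]
    rw [hx] at this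
    have hin : ⟪g, -(α • g)⟫ = -(α * ‖g‖ ^ 2) := by
      rw [inner_neg_right, real_inner_smul_right, real_inner_self_eq_norm_sq]
    rw [hin] at this
    linarith
  have hB : f xk - f xstar ≤ ⟪g, e⟫ - μ / 2 * ‖e‖ ^ 2 := by
    have := hsc xk xstar
    have h1 : ⟪g, xstar - xk⟫ = -⟪g, e⟫ := by
      rw [he, show xstar - xk = -(xk - xstar) by abel, inner_neg_right]
    have h2 : ‖xstar - xk‖ = ‖e‖ := by rw [he, norm_sub_rev]
    rw [h1, h2] at this
    linarith
  have hC : ‖xk1 - xstar‖ ^ 2 = ‖e‖ ^ 2 - 2 * α * ⟪g, e⟫ + α ^ 2 * ‖g‖ ^ 2 := by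
    have hx : xk1 - xstar = e - α • g := by rw [hstep, he]; abel
    rw [hx, @norm_sub_sq_real, real_inner_smul_right, norm_smul, mul_pow]
    rw [real_inner_comm]
    simp [abs_of_pos hα]
    ring
  have hαL : α * (L + μ) ≤ 2 := by
    rw [div_eq_mul_inv] at hα'
    have hLμ : (0:ℝ) < L + μ := by linarith
    calc α * (L + μ) ≤ 2 * (L + μ)⁻¹ * (L + μ) := by
          exact mul_le_mul_of_nonneg_right hα' hLμ.le
      _ = 2 := by field_simp
  have h1 : μ * α * (f xk - f xstar) ≤ μ * α * (⟪g, e⟫ - μ / 2 * ‖e‖ ^ 2) :=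
    mul_le_mul_of_nonneg_left hB (by positivity)
  have h2 : 0 ≤ α * ‖g‖ ^ 2 * (2 - (L + μ) * α) := by
    apply mul_nonneg (by positivity)
    nlinarith
  rw [hC]
  nlinarith [h1, h2, hA]
end

section
/- Let f ∈ S¹_{μ,L} with 0 < μ ≤ L and x* the minimizer. For x = (x, v) ∈ ℝⁿ × ℝⁿ define L(x,v) = f(x) - f(x*) + (μ/2)‖v - x*‖², and the heavy-ball vector field G(x,v) = (v - x, x - v - ∇f(x)/μ). Then -⟨∇L(x,v), G(x,v)⟩ ≥ L(x,v) + (μ/2)‖x - v‖² for all x, v. -/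
open RealInnerProductSpace

theorem stmt_18 (n : ℕ) (μ L : ℝ) (hμ : 0 < μ) (hμL : μ ≤ L)
    (f : EuclideanSpace ℝ (Fin n) → ℝ) (f' : EuclideanSpace ℝ (Fin n) → EuclideanSpace ℝ (Fin n))
    (hgrad : ∀ x, HasGradientAt f (f' x) x)
    (hsc : ∀ x y, f y ≥ f x + ⟪f' x, y - x⟫ + μ / 2 * ‖y - x‖ ^ 2)
    (hlip : ∀ x y, ‖f' x - f' y‖ ≤ L * ‖x - y‖)
    (xstar : EuclideanSpace ℝ (Fin n)) (hmin : ∀ x, f xstar ≤ f x) (hcrit : f' xstar = 0) :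
    ∀ x v : EuclideanSpace ℝ (Fin n),
      -(⟪f' x, v - x⟫ + ⟪μ • (v - xstar), x - v - μ⁻¹ • f' x⟫) ≥
        (f x - f xstar + μ / 2 * ‖v - xstar‖ ^ 2) + μ / 2 * ‖x - v‖ ^ 2 := by
  intro x v
  have h1 := hsc x xstar
  have e1 : ⟪μ • (v - xstar), x - v - μ⁻¹ • f' x⟫
      = μ * ⟪v - xstar, x - v⟫ - ⟪v - xstar, f' x⟫ := by
    rw [real_inner_smul_left, inner_sub_right, real_inner_smul_right]
    field_simp
  have e2 : ‖x - xstar‖ ^ 2 = ‖x - v‖ ^ 2 + 2 * ⟪x - v, v - xstar⟫ + ‖v - xstar‖ ^ 2 := by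
    have h := norm_add_sq_real (x - v) (v - xstar)
    rw [sub_add_sub_cancel] at h
    linarith
  have e3 : ⟪v - xstar, f' x⟫ = ⟪f' x, v - x⟫ - ⟪f' x, xstar - x⟫ := by
    rw [← inner_sub_right, real_inner_comm]
    congr 1
    abel
  have e4 : ⟪v - xstar, x - v⟫ = ⟪x - v, v - xstar⟫ := real_inner_comm _ _
  have e2' : μ * ‖xstar - x‖ ^ 2
      = μ * ‖x - v‖ ^ 2 + 2 * μ * ⟪x - v, v - xstar⟫ + μ * ‖v - xstar‖ ^ 2 := by
    rw [norm_sub_rev, e2]; ring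
  rw [e1, e4, e3]
  nlinarith [h1, e2']
end

section
/- Let f be convex and differentiable with minimizer x*, and set γ(t) > 0. Define L(x, v, γ) = f(x) - f(x*) + (γ/2)‖v - x*‖² and the AVD vector field G(x, v, γ) = (√γ (v - x), -∇f(x)/√γ, -γ^{3/2}). Then -⟨∇L, G⟩ ≥ √γ · L(x, v, γ) for all (x, v, γ) with γ > 0. -/
open RealInnerProductSpace

lemma grad_ineq_aux {n : ℕ} {f : EuclideanSpace ℝ (Fin n) → ℝ}
    {f' : EuclideanSpace ℝ (Fin n) → EuclideanSpace ℝ (Fin n)}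
    (hgrad : ∀ x, HasGradientAt f (f' x) x)
    (hconv : ConvexOn ℝ Set.univ f)
    (x y : EuclideanSpace ℝ (Fin n)) :
    ⟪f' x, y - x⟫ ≤ f y - f x := by
  set g : ℝ → ℝ := fun t => f (x + t • (y - x)) with hg
  have hgconv : ConvexOn ℝ Set.univ g := by
    have := hconv.comp_affineMap (AffineMap.lineMap x y)
    have h' : g = f ∘ AffineMap.lineMap x y := by
      ext t; simp [g, AffineMap.lineMap_apply, add_comm]
    rw [h']; exact this.subset (Set.subset_univ _) convex_univ
  have hcurve : HasDerivAt (fun t : ℝ => x + t • (y - x)) (y - x) 0 := by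
    simpa using ((hasDerivAt_id (0 : ℝ)).smul_const (y - x)).const_add x
  have hd : HasDerivAt g ⟪f' x, y - x⟫ 0 := by
    have hF : HasFDerivAt f ((InnerProductSpace.toDual ℝ (EuclideanSpace ℝ (Fin n))) (f' x))
        (x + (0 : ℝ) • (y - x)) := by simpa using (hgrad x).hasFDerivAt
    have := hF.comp_hasDerivAt (0 : ℝ) hcurve
    simpa [g, Function.comp_def] using this
  have := hgconv.le_slope_of_hasDerivAt (Set.mem_univ (0 : ℝ)) (Set.mem_univ (1 : ℝ))
    one_pos hd
  simpa [g, slope_def_field] using this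

theorem stmt_19 (n : ℕ)
    (f : EuclideanSpace ℝ (Fin n) → ℝ) (f' : EuclideanSpace ℝ (Fin n) → EuclideanSpace ℝ (Fin n))
    (hgrad : ∀ x, HasGradientAt f (f' x) x)
    (hconv : ConvexOn ℝ Set.univ f)
    (xstar : EuclideanSpace ℝ (Fin n)) (hmin : ∀ x, f xstar ≤ f x) :
    ∀ (x v : EuclideanSpace ℝ (Fin n)) (γ : ℝ), 0 < γ →
      -(⟪f' x, Real.sqrt γ • (v - x)⟫
        + ⟪γ • (v - xstar), (-(Real.sqrt γ)⁻¹) • f' x⟫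
        + ‖v - xstar‖ ^ 2 / 2 * (-(γ * Real.sqrt γ))) ≥
      Real.sqrt γ * (f x - f xstar + γ / 2 * ‖v - xstar‖ ^ 2) := by
  intro x v γ hγ
  have hs : 0 < Real.sqrt γ := Real.sqrt_pos.mpr hγ
  have hss : Real.sqrt γ * Real.sqrt γ = γ := Real.mul_self_sqrt hγ.le
  have hgi : ⟪f' x, xstar - x⟫ ≤ f xstar - f x := grad_ineq_aux hgrad hconv x xstar
  have h1 : ⟪f' x, v - x⟫ = ⟪f' x, v - xstar⟫ + ⟪f' x, xstar - x⟫ := by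
    rw [← inner_add_right]; congr 1; abel
  rw [real_inner_smul_right, real_inner_smul_left, real_inner_smul_right, h1,
    real_inner_comm (v - xstar) (f' x)]
  have h2 : γ * (Real.sqrt γ)⁻¹ = Real.sqrt γ := by
    rw [← hss, Real.sqrt_mul_self hs.le, mul_assoc, mul_inv_cancel₀ hs.ne', mul_one]
  have h3 : γ * (-(Real.sqrt γ)⁻¹ * ⟪v - xstar, f' x⟫)
      = -(Real.sqrt γ * ⟪v - xstar, f' x⟫) := by
    rw [show γ * (-(Real.sqrt γ)⁻¹ * ⟪v - xstar, f' x⟫)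
        = γ * (Real.sqrt γ)⁻¹ * (-⟪v - xstar, f' x⟫) by ring, h2]; ring
  rw [h3]
  nlinarith [mul_le_mul_of_nonneg_left hgi hs.le]
end
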